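/- arXiv:1602.08392 — 2 statements merged into one kernel-verified Lean document; each statement's English description precedes it below -/
import Mathlib

section
/- Let A be a 4×4 complex matrix of determinant 1 with A* H A = H, where H is the Hermitian matrix of signature (3,1) with H(1,4)=H(4,1)=H(2,2)=H(3,3)=1 and other entries 0. Then σ(A) := (tr(A)^2 - tr(A^2))/2 is a real number. -/
open Matrix



private lemma fs3 : (Fin.succ 2 : Fin 4) = 3 := rfl
private lemma fs2 : (Fin.succ 1 : Fin 4) = 2 := rfl
private lemma fs1 : (Fin.succ 0 : Fin 4) = 1 := rfl
private lemma fc0 : (Fin.castSucc 0 : Fin 4) = 0 := rfl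
private lemma fc1 : (Fin.castSucc 1 : Fin 4) = 1 := rfl
private lemma fc2 : (Fin.castSucc 2 : Fin 4) = 2 := rfl

set_option maxHeartbeats 1000000 in
lemma adjugate_fin_four (M : Matrix (Fin 4) (Fin 4) ℂ) :
    adjugate M =
    !![(M 1 1 * M 2 2 * M 3 3 - M 1 1 * M 2 3 * M 3 2 - M 1 2 * M 2 1 * M 3 3 + M 1 2 * M 2 3 * M 3 1 + M 1 3 * M 2 1 * M 3 2 - M 1 3 * M 2 2 * M 3 1),
       -(M 0 1 * M 2 2 * M 3 3 - M 0 1 * M 2 3 * M 3 2 - M 0 2 * M 2 1 * M 3 3 + M 0 2 * M 2 3 * M 3 1 + M 0 3 * M 2 1 * M 3 2 - M 0 3 * M 2 2 * M 3 1),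
       (M 0 1 * M 1 2 * M 3 3 - M 0 1 * M 1 3 * M 3 2 - M 0 2 * M 1 1 * M 3 3 + M 0 2 * M 1 3 * M 3 1 + M 0 3 * M 1 1 * M 3 2 - M 0 3 * M 1 2 * M 3 1),
       -(M 0 1 * M 1 2 * M 2 3 - M 0 1 * M 1 3 * M 2 2 - M 0 2 * M 1 1 * M 2 3 + M 0 2 * M 1 3 * M 2 1 + M 0 3 * M 1 1 * M 2 2 - M 0 3 * M 1 2 * M 2 1);
       -(M 1 0 * M 2 2 * M 3 3 - M 1 0 * M 2 3 * M 3 2 - M 1 2 * M 2 0 * M 3 3 + M 1 2 * M 2 3 * M 3 0 + M 1 3 * M 2 0 * M 3 2 - M 1 3 * M 2 2 * M 3 0),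
       (M 0 0 * M 2 2 * M 3 3 - M 0 0 * M 2 3 * M 3 2 - M 0 2 * M 2 0 * M 3 3 + M 0 2 * M 2 3 * M 3 0 + M 0 3 * M 2 0 * M 3 2 - M 0 3 * M 2 2 * M 3 0),
       -(M 0 0 * M 1 2 * M 3 3 - M 0 0 * M 1 3 * M 3 2 - M 0 2 * M 1 0 * M 3 3 + M 0 2 * M 1 3 * M 3 0 + M 0 3 * M 1 0 * M 3 2 - M 0 3 * M 1 2 * M 3 0),
       (M 0 0 * M 1 2 * M 2 3 - M 0 0 * M 1 3 * M 2 2 - M 0 2 * M 1 0 * M 2 3 + M 0 2 * M 1 3 * M 2 0 + M 0 3 * M 1 0 * M 2 2 - M 0 3 * M 1 2 * M 2 0);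
       (M 1 0 * M 2 1 * M 3 3 - M 1 0 * M 2 3 * M 3 1 - M 1 1 * M 2 0 * M 3 3 + M 1 1 * M 2 3 * M 3 0 + M 1 3 * M 2 0 * M 3 1 - M 1 3 * M 2 1 * M 3 0),
       -(M 0 0 * M 2 1 * M 3 3 - M 0 0 * M 2 3 * M 3 1 - M 0 1 * M 2 0 * M 3 3 + M 0 1 * M 2 3 * M 3 0 + M 0 3 * M 2 0 * M 3 1 - M 0 3 * M 2 1 * M 3 0),
       (M 0 0 * M 1 1 * M 3 3 - M 0 0 * M 1 3 * M 3 1 - M 0 1 * M 1 0 * M 3 3 + M 0 1 * M 1 3 * M 3 0 + M 0 3 * M 1 0 * M 3 1 - M 0 3 * M 1 1 * M 3 0),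
       -(M 0 0 * M 1 1 * M 2 3 - M 0 0 * M 1 3 * M 2 1 - M 0 1 * M 1 0 * M 2 3 + M 0 1 * M 1 3 * M 2 0 + M 0 3 * M 1 0 * M 2 1 - M 0 3 * M 1 1 * M 2 0);
       -(M 1 0 * M 2 1 * M 3 2 - M 1 0 * M 2 2 * M 3 1 - M 1 1 * M 2 0 * M 3 2 + M 1 1 * M 2 2 * M 3 0 + M 1 2 * M 2 0 * M 3 1 - M 1 2 * M 2 1 * M 3 0),
       (M 0 0 * M 2 1 * M 3 2 - M 0 0 * M 2 2 * M 3 1 - M 0 1 * M 2 0 * M 3 2 + M 0 1 * M 2 2 * M 3 0 + M 0 2 * M 2 0 * M 3 1 - M 0 2 * M 2 1 * M 3 0),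
       -(M 0 0 * M 1 1 * M 3 2 - M 0 0 * M 1 2 * M 3 1 - M 0 1 * M 1 0 * M 3 2 + M 0 1 * M 1 2 * M 3 0 + M 0 2 * M 1 0 * M 3 1 - M 0 2 * M 1 1 * M 3 0),
       (M 0 0 * M 1 1 * M 2 2 - M 0 0 * M 1 2 * M 2 1 - M 0 1 * M 1 0 * M 2 2 + M 0 1 * M 1 2 * M 2 0 + M 0 2 * M 1 0 * M 2 1 - M 0 2 * M 1 1 * M 2 0)]
 := by
  ext i j
  rw [adjugate_fin_succ_eq_det_submatrix, det_fin_three]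
  fin_cases i <;> fin_cases j <;>
    simp +decide [Fin.succAbove, Fin.lt_def, fs1, fs2, fs3, fc0, fc1, fc2] <;> ring

set_option maxHeartbeats 1000000 in
lemma det_fin_four' (M : Matrix (Fin 4) (Fin 4) ℂ) :
    M.det = 
M 0 0 * M 1 1 * M 2 2 * M 3 3 - M 0 0 * M 1 1 * M 2 3 * M 3 2 - M 0 0 * M 1 2 * M 2 1 * M 3 3 + M 0 0 * M 1 2 * M 2 3 * M 3 1 + M 0 0 * M 1 3 * M 2 1 * M 3 2 - M 0 0 * M 1 3 * M 2 2 * M 3 1 - M 0 1 * M 1 0 * M 2 2 * M 3 3 + M 0 1 * M 1 0 * M 2 3 * M 3 2 + M 0 1 * M 1 2 * M 2 0 * M 3 3 - M 0 1 * M 1 2 * M 2 3 * M 3 0 - M 0 1 * M 1 3 * M 2 0 * M 3 2 + M 0 1 * M 1 3 * M 2 2 * M 3 0 + M 0 2 * M 1 0 * M 2 1 * M 3 3 - M 0 2 * M 1 0 * M 2 3 * M 3 1 - M 0 2 * M 1 1 * M 2 0 * M 3 3 + M 0 2 * M 1 1 * M 2 3 * M 3 0 + M 0 2 * M 1 3 *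 M 2 0 * M 3 1 - M 0 2 * M 1 3 * M 2 1 * M 3 0 - M 0 3 * M 1 0 * M 2 1 * M 3 2 + M 0 3 * M 1 0 * M 2 2 * M 3 1 + M 0 3 * M 1 1 * M 2 0 * M 3 2 - M 0 3 * M 1 1 * M 2 2 * M 3 0 - M 0 3 * M 1 2 * M 2 0 * M 3 1 + M 0 3 * M 1 2 * M 2 1 * M 3 0
 := by
  rw [det_succ_row_zero, Fin.sum_univ_four]
  simp +decide [det_fin_three, Fin.succAbove, Fin.lt_def, fs1, fs2, fs3, fc0, fc1, fc2]
  ring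

private lemma trace_fin_four' (M : Matrix (Fin 4) (Fin 4) ℂ) :
    M.trace = M 0 0 + M 1 1 + M 2 2 + M 3 3 := by
  simp [Matrix.trace, Fin.sum_univ_four]

set_option maxHeartbeats 4000000 in
lemma adj_sigma (M : Matrix (Fin 4) (Fin 4) ℂ) :
    (adjugate M).trace ^ 2 - (adjugate M * adjugate M).trace
      = M.det * (M.trace ^ 2 - (M * M).trace) := by
  rw [trace_fin_four', trace_fin_four', trace_fin_four', trace_fin_four',
    det_fin_four', adjugate_fin_four]
  simp only [Matrix.mul_apply, Fin.sum_univ_four, Matrix.cons_val', Matrix.cons_val_zero,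
    Matrix.cons_val_one, Matrix.head_cons, Matrix.empty_val', Matrix.cons_val_fin_one,
    Matrix.head_fin_const, Matrix.cons_val_two, Matrix.tail_cons, Matrix.cons_val_three,
    Matrix.of_apply]
  ring

noncomputable def Hform : Matrix (Fin 4) (Fin 4) ℂ :=
  !![0, 0, 0, 1; 0, 1, 0, 0; 0, 0, 1, 0; 1, 0, 0, 0]

theorem su31_sigma_real (A : Matrix (Fin 4) (Fin 4) ℂ)
    (hdet : A.det = 1) (hA : Aᴴ * Hform * A = Hform) :
    ∃ r : ℝ, (A.trace ^ 2 - (A ^ 2).trace) / 2 = (r : ℂ) := by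
  have hH2 : Hform * Hform = 1 := by
    ext i j
    fin_cases i <;> fin_cases j <;>
      simp [Hform, Matrix.mul_apply, Fin.sum_univ_four, Matrix.one_apply, Matrix.vecHead, Matrix.vecTail]
  have hB : (Hform * Aᴴ * Hform) * A = 1 := by
    calc (Hform * Aᴴ * Hform) * A = Hform * (Aᴴ * Hform * A) := by
          simp only [Matrix.mul_assoc]
      _ = 1 := by rw [hA, hH2]
  have hinv : A⁻¹ = Hform * Aᴴ * Hform := Matrix.inv_eq_left_inv hB
  have hadj : adjugate A = Hform * Aᴴ * Hform := by
    rw [← hinv, Matrix.inv_def, hdet, Ring.inverse_one, one_smul]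
  have key := adj_sigma A
  rw [hadj, hdet, one_mul] at key
  have ht : (Hform * Aᴴ * Hform).trace = star A.trace := by
    rw [Matrix.trace_mul_comm, ← Matrix.mul_assoc, hH2, Matrix.one_mul,
      Matrix.trace_conjTranspose]
  have ht2 : ((Hform * Aᴴ * Hform) * (Hform * Aᴴ * Hform)).trace = star (A * A).trace := by
    have : (Hform * Aᴴ * Hform) * (Hform * Aᴴ * Hform) = Hform * (Aᴴ * Aᴴ) * Hform := by
      calc (Hform * Aᴴ * Hform) * (Hform * Aᴴ * Hform)
          = Hform * (Aᴴ * ((Hform * Hform) * (Aᴴ * Hform))) := by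
            simp only [Matrix.mul_assoc]
        _ = Hform * (Aᴴ * (Aᴴ * Hform)) := by rw [hH2, Matrix.one_mul]
        _ = Hform * (Aᴴ * Aᴴ) * Hform := by simp only [Matrix.mul_assoc]
    rw [this, Matrix.trace_mul_comm, ← Matrix.mul_assoc, hH2, Matrix.one_mul,
      ← Matrix.conjTranspose_mul, Matrix.trace_conjTranspose]
  rw [ht, ht2] at key
  have hS : star (A.trace ^ 2 - (A * A).trace) = A.trace ^ 2 - (A * A).trace := by
    rw [star_sub, star_pow]; exact key
  have hA2 : (A ^ 2) = A * A := sq A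
  have hreal : ((A.trace ^ 2 - (A * A).trace).re : ℂ) = A.trace ^ 2 - (A * A).trace :=
    Complex.conj_eq_iff_re.mp hS
  refine ⟨(A.trace ^ 2 - (A * A).trace).re / 2, ?_⟩
  rw [hA2]
  push_cast
  rw [hreal]
end

section
/- Let A and B be 4×4 complex matrices, each of determinant 1 and satisfying M* H M = H for the signature (3,1) Hermitian matrix H (with H(1,4)=H(4,1)=H(2,2)=H(3,3)=1, other entries 0). Then tr((B^2A)^2·(ABA)) = tr(B^2A)·tr(B^2A^2BA) - ((tr(B^2A)^2 - tr((B^2A)^2))/2)·tr(A^2B) + conj(tr(B^2A))·tr(AB^{-1}) - conj(tr(A^{-1}B^2AB)). -/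
open Matrix

theorem detfour (M : Matrix (Fin 4) (Fin 4) ℂ) : M.det =
    M 0 0 * (M 1 1 * (M 2 2 * M 3 3 - M 2 3 * M 3 2)
      - M 1 2 * (M 2 1 * M 3 3 - M 2 3 * M 3 1)
      + M 1 3 * (M 2 1 * M 3 2 - M 2 2 * M 3 1))
    - M 0 1 * (M 1 0 * (M 2 2 * M 3 3 - M 2 3 * M 3 2)
      - M 1 2 * (M 2 0 * M 3 3 - M 2 3 * M 3 0)
      + M 1 3 * (M 2 0 * M 3 2 - M 2 2 * M 3 0))
    + M 0 2 * (M 1 0 * (M 2 1 * M 3 3 - M 2 3 * M 3 1)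
      - M 1 1 * (M 2 0 * M 3 3 - M 2 3 * M 3 0)
      + M 1 3 * (M 2 0 * M 3 1 - M 2 1 * M 3 0))
    - M 0 3 * (M 1 0 * (M 2 1 * M 3 2 - M 2 2 * M 3 1)
      - M 1 1 * (M 2 0 * M 3 2 - M 2 2 * M 3 0)
      + M 1 2 * (M 2 0 * M 3 1 - M 2 1 * M 3 0)) := by
  rw [Matrix.det_succ_row_zero]
  simp [Fin.sum_univ_succ, Matrix.det_fin_three, Matrix.submatrix,
    show (Fin.succ 2 : Fin 4) = 3 from rfl,
    show Fin.succAbove (1 : Fin 4) 2 = 3 from rfl,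
    show Fin.succAbove (2 : Fin 4) 2 = 3 from rfl,
    show (Fin.castSucc 2 : Fin 4) = 2 from rfl, show Fin.succAbove (3 : Fin 4) 2 = 2 from rfl]
  ring

set_option maxHeartbeats 2000000 in
theorem CH4 (V : Matrix (Fin 4) (Fin 4) ℂ) :
    V*V*V*V - V.trace • (V*V*V) + ((V.trace^2 - (V*V).trace)/2) • (V*V)
      - ((V.trace^3 - 3*V.trace*(V*V).trace + 2*(V*V*V).trace)/6) • V
      + V.det • (1 : Matrix (Fin 4) (Fin 4) ℂ) = 0 := by
  ext i j
  fin_cases i <;> fin_cases j <;>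
    simp [detfour, Matrix.mul_apply, Matrix.trace, Matrix.diag, Fin.sum_univ_four,
      Matrix.one_apply] <;> ring


theorem key (V U : Matrix (Fin 4) (Fin 4) ℂ) (h : V.det = 1) :
    (V*(V*U)).trace = V.trace * (V*U).trace - ((V.trace^2 - (V*V).trace)/2) * U.trace
      + V⁻¹.trace * (V⁻¹*U).trace - (V⁻¹*(V⁻¹*U)).trace := by
  have hu : IsUnit V.det := h ▸ isUnit_one
  have hVi : V * V⁻¹ = 1 := mul_nonsing_inv V hu
  have hiV : V⁻¹ * V = 1 := nonsing_inv_mul V hu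
  have hc1 : ∀ X, V * (V⁻¹ * X) = X := fun X => by rw [← mul_assoc, hVi, one_mul]
  have hc2 : ∀ X, V⁻¹ * (V * X) = X := fun X => by rw [← mul_assoc, hiV, one_mul]
  have hCH := CH4 V
  have h3 := congrArg (fun X => (X * V⁻¹).trace) hCH
  have h4 := congrArg (fun X => (X * (V⁻¹*(V⁻¹*U))).trace) hCH
  simp only [sub_mul, add_mul, smul_mul_assoc, one_mul, zero_mul, mul_assoc, hVi, hc1, hc2,
    mul_one, h, one_smul, trace_sub, trace_add, trace_smul, trace_zero, trace_one, Fintype.card_fin, Nat.cast_ofNat,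
    smul_eq_mul] at h3 h4
  linear_combination h4 - (V⁻¹*U).trace * h3

theorem HH : Hform * Hform = 1 := by
  ext i j
  fin_cases i <;> fin_cases j <;>
    simp [Hform, Matrix.mul_apply, Fin.sum_univ_four, Matrix.one_apply, Matrix.vecHead, Matrix.vecTail]

theorem inv_eqH (M : Matrix (Fin 4) (Fin 4) ℂ) (hM : Mᴴ * Hform * M = Hform) :
    M⁻¹ = Hform * Mᴴ * Hform := by
  apply Matrix.inv_eq_left_inv
  calc Hform * Mᴴ * Hform * M = Hform * (Mᴴ * Hform * M) := by noncomm_ring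
    _ = Hform * Hform := by rw [hM]
    _ = 1 := HH

theorem tr_invH (M : Matrix (Fin 4) (Fin 4) ℂ) (hM : Mᴴ * Hform * M = Hform) :
    M⁻¹.trace = (starRingEnd ℂ) M.trace := by
  rw [inv_eqH M hM, Matrix.trace_mul_comm, ← mul_assoc, HH, one_mul,
    Matrix.trace_conjTranspose]
  rfl

theorem mul_memH (M N : Matrix (Fin 4) (Fin 4) ℂ) (hM : Mᴴ * Hform * M = Hform)
    (hN : Nᴴ * Hform * N = Hform) : (M * N)ᴴ * Hform * (M * N) = Hform := by
  rw [conjTranspose_mul]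
  calc Nᴴ * Mᴴ * Hform * (M * N) = Nᴴ * (Mᴴ * Hform * M) * N := by noncomm_ring
    _ = Nᴴ * Hform * N := by rw [hM]
    _ = Hform := hN

theorem inv_memH (M : Matrix (Fin 4) (Fin 4) ℂ) (hM : Mᴴ * Hform * M = Hform) :
    (M⁻¹)ᴴ * Hform * M⁻¹ = Hform := by
  have h1 : Hform * Mᴴ * Hform * M = 1 := by
    calc Hform * Mᴴ * Hform * M = Hform * (Mᴴ * Hform * M) := by noncomm_ring
      _ = Hform * Hform := by rw [hM]
      _ = 1 := HH
  have h2 : M * (Hform * Mᴴ * Hform) = 1 := mul_eq_one_comm.mp h1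
  have hHc : Hformᴴ = Hform := by
    ext i j
    fin_cases i <;> fin_cases j <;> simp [Hform, Matrix.vecHead, Matrix.vecTail]
  rw [inv_eqH M hM, conjTranspose_mul, conjTranspose_mul, hHc, conjTranspose_conjTranspose]
  calc Hform * (M * Hform) * Hform * (Hform * Mᴴ * Hform)
      = Hform * (M * ((Hform * Hform) * (Hform * (Mᴴ * Hform)))) := by noncomm_ring
    _ = Hform * (M * (Hform * (Mᴴ * Hform))) := by rw [HH, one_mul]
    _ = Hform * (M * (Hform * Mᴴ * Hform)) := by noncomm_ring
    _ = Hform * 1 := by rw [h2]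
    _ = Hform := mul_one _


theorem su31_elimination_identity (A B : Matrix (Fin 4) (Fin 4) ℂ)
    (hdetA : A.det = 1) (hA : Aᴴ * Hform * A = Hform)
    (hdetB : B.det = 1) (hB : Bᴴ * Hform * B = Hform) :
    ((B ^ 2 * A) ^ 2 * (A * B * A)).trace =
      (B ^ 2 * A).trace * (B ^ 2 * A ^ 2 * B * A).trace
        - (((B ^ 2 * A).trace ^ 2 - ((B ^ 2 * A) ^ 2).trace) / 2) * (A ^ 2 * B).trace
        + (starRingEnd ℂ) ((B ^ 2 * A).trace) * (A * B⁻¹).trace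
        - (starRingEnd ℂ) ((A⁻¹ * B ^ 2 * A * B).trace) := by
  set V := B ^ 2 * A with hVdef
  set U := A * B * A with hUdef
  have huA : IsUnit A.det := hdetA ▸ isUnit_one
  have huB : IsUnit B.det := hdetB ▸ isUnit_one
  have hAi : A * A⁻¹ = 1 := mul_nonsing_inv A huA
  have hBi : B * B⁻¹ = 1 := mul_nonsing_inv B huB
  have cA1 : ∀ X : Matrix (Fin 4) (Fin 4) ℂ, A * (A⁻¹ * X) = X := fun X => by
    rw [← mul_assoc, hAi, one_mul]
  have cB1 : ∀ X : Matrix (Fin 4) (Fin 4) ℂ, B * (B⁻¹ * X) = X := fun X => by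
    rw [← mul_assoc, hBi, one_mul]
  have hdV : V.det = 1 := by simp [hVdef, det_mul, det_pow, hdetA, hdetB]
  have hB2 : (B ^ 2)ᴴ * Hform * B ^ 2 = Hform := by
    rw [pow_two]; exact mul_memH B B hB hB
  have hV : Vᴴ * Hform * V = Hform := mul_memH _ _ hB2 hA
  have hW : ((A⁻¹ * B ^ 2 * A * B))ᴴ * Hform * (A⁻¹ * B ^ 2 * A * B) = Hform :=
    mul_memH _ _ (mul_memH _ _ (mul_memH _ _ (inv_memH A hA) hB2) hA) hB
  have hk := key V U hdV
  -- term 1: V*U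
  have e1 : V * U = B ^ 2 * A ^ 2 * B * A := by
    rw [hVdef, hUdef]; noncomm_ring
  -- term 2: trace U = trace (A^2*B)
  have e2 : U.trace = (A ^ 2 * B).trace := by
    rw [hUdef, Matrix.trace_mul_comm]
    congr 1; noncomm_ring
  -- term 3
  have e3 : V⁻¹.trace = (starRingEnd ℂ) V.trace := tr_invH V hV
  -- inverse of V
  have hVinv : V⁻¹ = A⁻¹ * (B⁻¹ * B⁻¹) := by
    rw [hVdef, Matrix.mul_inv_rev, pow_two, Matrix.mul_inv_rev]
  -- term 4
  have e4 : (V⁻¹ * U).trace = (A * B⁻¹).trace := by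
    rw [Matrix.trace_mul_comm, hVinv, hUdef]
    congr 1
    simp only [mul_assoc, cA1, cB1]
  -- term 5
  have e5 : (V⁻¹ * (V⁻¹ * U)).trace = (starRingEnd ℂ) ((A⁻¹ * B ^ 2 * A * B).trace) := by
    rw [← tr_invH _ hW]
    have hWinv : (A⁻¹ * B ^ 2 * A * B)⁻¹ = B⁻¹ * (A⁻¹ * (B⁻¹ * B⁻¹) * A) := by
      rw [Matrix.mul_inv_rev, Matrix.mul_inv_rev, Matrix.mul_inv_rev,
        Matrix.nonsing_inv_nonsing_inv A huA, pow_two, Matrix.mul_inv_rev]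
      noncomm_ring
    rw [hWinv, hVinv, hUdef,
      Matrix.trace_mul_comm (B⁻¹) (A⁻¹ * (B⁻¹ * B⁻¹) * A),
      Matrix.trace_mul_comm (A⁻¹ * (B⁻¹ * B⁻¹)) (A⁻¹ * (B⁻¹ * B⁻¹) * (A * B * A))]
    congr 1
    simp only [mul_assoc, cA1, cB1]
  rw [show (V ^ 2 * U) = V * (V * U) from by noncomm_ring, hk, e1, e2, e3, e4, e5, hVdef, ← pow_two]
end
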